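/- Over the odd alphabet {1,b} with b odd, b ≥ 3, the minimal length l_i of words in generation T_i of the tree of strong bispecial f-smooth words satisfies l_i ≥ Cλ^i − D − 1 for some constants C > 0, D ≥ 0, where λ = (1 + √(2b−1))/2 is the dominant root of X² − X − (b−1)/2. -/

import Mathlib

namespace SmoothWords

/-- Complement of a letter over the alphabet `{a, b}`. -/
def flip (a b c : ℕ) : ℕ := if c = a then b else a

/-- Run-length encoding of a finite word: list of (letter, exponent) pairs. -/
def runs : List ℕ → List (ℕ × ℕ)
  | [] => []
  | c :: t =>
    match runs t with
    | [] => [(c, 1)]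
    | (d, k) :: r => if c = d then (c, k + 1) :: r else (c, 1) :: (d, k) :: r

/-- The exponents of the canonical run-length factorization. -/
def exps (u : List ℕ) : List ℕ := (runs u).map Prod.snd

/-- Boundary cut used by the finite derivatives. -/
def cut (a b p : ℕ) : List ℕ := if p ≤ a then [] else [b]

/-- The finite derivative `D_f`. -/
def Df (a b : ℕ) (u : List ℕ) : List ℕ :=
  match exps u with
  | [] => []
  | [p] => cut a b p
  | p :: q :: rest =>
      cut a b p ++ (q :: rest).dropLast ++ cut a b ((q :: rest).getLast (List.cons_ne_nil _ _))

/-- `u` is f-derivable: letters in `{a,b}`, inner run exponents in `{a,b}`,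
boundary run exponents in `[1, b]`. -/
def Cf1 (a b : ℕ) (u : List ℕ) : Prop :=
  (∀ c ∈ u, c = a ∨ c = b) ∧
  (∀ p ∈ exps u, p ≤ b) ∧
  (∀ p ∈ ((exps u).drop 1).dropLast, p = a ∨ p = b)

/-- `u` is f-smooth: all iterated finite derivatives are f-derivable
(equivalently, some iterate is `ε`). -/
def FSmooth (a b : ℕ) (u : List ℕ) : Prop := ∀ n, Cf1 a b ((Df a b)^[n] u)

/-- The r-derivative `D_r`: keeps all exponents but cuts the last one. -/
def Dr (a b : ℕ) (u : List ℕ) : List ℕ :=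
  match exps u with
  | [] => []
  | p :: rest =>
      (p :: rest).dropLast ++ cut a b ((p :: rest).getLast (List.cons_ne_nil _ _))

/-- `u` is r-derivable. -/
def Cr1 (a b : ℕ) (u : List ℕ) : Prop :=
  (∀ c ∈ u, c = a ∨ c = b) ∧
  (∀ p ∈ exps u, p ≤ b) ∧
  (∀ p ∈ (exps u).dropLast, p = a ∨ p = b)

/-- `u` is r-smooth. -/
def RSmooth (a b : ℕ) (u : List ℕ) : Prop := ∀ n, Cr1 a b ((Dr a b)^[n] u)

/-- `y` is the derivative of the infinite word `x`: `x = x₀^{y₀} x̄₀^{y₁} x₀^{y₂} ⋯`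
with all `y i ∈ {a, b}` (in particular `x` is derivable). -/
def DerivesTo (a b : ℕ) (x y : ℕ → ℕ) : Prop :=
  (∀ i, y i = a ∨ y i = b) ∧
  ∃ S : ℕ → ℕ, S 0 = 0 ∧ (∀ k, S (k + 1) = S k + y k) ∧
    ∀ k i, S k ≤ i → i < S (k + 1) → x i = (flip a b)^[k] (x 0)

/-- An infinite word over `{a,b}` is smooth if it is infinitely derivable. -/
def Smooth (a b : ℕ) (x : ℕ → ℕ) : Prop :=
  (∀ i, x i = a ∨ x i = b) ∧
  ∃ X : ℕ → ℕ → ℕ, X 0 = x ∧ ∀ n, DerivesTo a b (X n) (X (n + 1))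

/-- Auxiliary for the f-primitives: alternate blocks with given exponents,
ending with a block of exponent `a`. -/
def pfAux (a b : ℕ) : ℕ → List ℕ → List ℕ
  | c, [] => List.replicate a c
  | c, p :: t => List.replicate p c ++ pfAux a b (flip a b c) t

/-- The f-primitive `P_{f,c}`. -/
def Pf (a b c : ℕ) (u : List ℕ) : List ℕ :=
  if c = a then List.replicate a a ++ pfAux a b b u
  else (List.replicate a a ++ pfAux a b b u).map (flip a b)

/-- `u` is a bispecial f-smooth word. -/
def Bispecial (a b : ℕ) (u : List ℕ) : Prop :=
  FSmooth a b u ∧ FSmooth a b (a :: u) ∧ FSmooth a b (b :: u) ∧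
    FSmooth a b (u ++ [a]) ∧ FSmooth a b (u ++ [b])

open Classical in
/-- The multiplicity `m(u) = |{aua,aub,bua,bub} ∩ C_f^∞| - 3`. -/
noncomputable def mult (a b : ℕ) (u : List ℕ) : ℤ :=
  (if FSmooth a b (a :: u ++ [a]) then 1 else 0) +
  (if FSmooth a b (a :: u ++ [b]) then 1 else 0) +
  (if FSmooth a b (b :: u ++ [a]) then 1 else 0) +
  (if FSmooth a b (b :: u ++ [b]) then 1 else 0) - 3

/-- The vertex of the tree `T` indexed by the path `s` from the root `ε`
(`false` = child by `P_{f,a}`, `true` = child by `P_{f,b}`). -/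
def node (a b : ℕ) : List Bool → List ℕ
  | [] => []
  | c :: s => Pf a b (if c then b else a) (node a b s)

/-- Total length `f(i) = ∑_{u ∈ T_i} |u|` of generation `i` of `T`. -/
def totalLen (a b i : ℕ) : ℕ :=
  ∑ s : Fin i → Bool, (node a b (List.ofFn s)).length

/-- Generation `i` of the tree `T`, as a finite set of words. -/
def genSet (a b i : ℕ) : Finset (List ℕ) :=
  (Finset.univ : Finset (Fin i → Bool)).image fun s => node a b (List.ofFn s)

/-- `b_i(n) = |T_i ∩ A^n|`. -/
def bfun (a b i n : ℕ) : ℕ := ((genSet a b i).filter fun u => u.length = n).card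

/-- `s_i(n) = ∑_{m<n} b_i(m)`. -/
def sfun (a b i n : ℕ) : ℕ := ∑ m ∈ Finset.range n, bfun a b i m

/-- `p_i(n) = ∑_{m<n} s_i(m)`. -/
def pfun (a b i n : ℕ) : ℕ := ∑ m ∈ Finset.range n, sfun a b i m

/-- `p(n) = ∑_i p_i(n)`. -/
noncomputable def pTot (a b n : ℕ) : ℝ := ∑' i : ℕ, (pfun a b i n : ℝ)

/-- `l_i`, the minimal length of a word of generation `i` of `T`. -/
noncomputable def li (a b i : ℕ) : ℕ :=
  sInf {m | ∃ s : Fin i → Bool, (node a b (List.ofFn s)).length = m}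

/-- `u` is a factor of the infinite word `x`. -/
def FactorOf (u : List ℕ) (x : ℕ → ℕ) : Prop :=
  ∃ i, u = (List.range u.length).map fun j => x (i + j)


/-! The letters of `u` are the run lengths of `P_{f,c}(u)` (between two boundary runs of length 1),
so `|P_{f,c}(u)| = Σ u + 2`; and since the runs alternate between `1` and `b`, every pair of letters
of `u` makes `Σ P_{f,c}(u)` exceed `Σ u` by at least `b - 1`. As all words of `T` have even length,
`|node (c :: c' :: t)| ≥ |node (c' :: t)| + (b - 1)/2 · |node t| + 2`. Taking minima, `l_i` obeys the
same recurrence, whose characteristic root is `λ`, so `l_{i+1} ≥ λ^i / λ` by a two-step induction. -/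

section Primitives

variable {a b : ℕ}

lemma flip_eq_or (c : ℕ) : flip a b c = a ∨ flip a b c = b := by
  unfold flip; split_ifs <;> simp

lemma map_flip_pfAux (u : List ℕ) (c : ℕ) :
    (pfAux a b c u).map (flip a b) = pfAux a b (flip a b c) u := by
  induction u generalizing c with
  | nil => simp [pfAux]
  | cons p t ih => simp [pfAux, ih]

lemma length_pfAux (u : List ℕ) (c : ℕ) : (pfAux a b c u).length = u.sum + a := by
  induction u generalizing c with
  | nil => simp [pfAux]
  | cons p t ih => simp only [pfAux, List.length_append, List.length_replicate, ih, List.sum_cons]; omega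

lemma mem_pfAux {u : List ℕ} {c x : ℕ} (hc : c = a ∨ c = b) (hx : x ∈ pfAux a b c u) :
    x = a ∨ x = b := by
  induction u generalizing c with
  | nil =>
    obtain ⟨-, rfl⟩ := List.mem_replicate.mp hx
    exact hc
  | cons p t ih =>
    rcases List.mem_append.mp hx with hx | hx
    · rw [(List.mem_replicate.mp hx).2]; exact hc
    · exact ih (flip_eq_or c) hx

lemma Pf_eq {c : ℕ} (hc : c = a ∨ c = b) (u : List ℕ) :
    Pf a b c u = List.replicate a c ++ pfAux a b (flip a b c) u := by
  unfold Pf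
  split_ifs with h
  · simp [h, flip]
  · obtain rfl : c = b := hc.resolve_left h
    simp [map_flip_pfAux, flip]

lemma node_cons_eq (c : Bool) (s : List Bool) : ∃ d, (d = a ∨ d = b) ∧
    node a b (c :: s) = List.replicate a d ++ pfAux a b (flip a b d) (node a b s) := by
  have hh : (if c then b else a) = a ∨ (if c then b else a) = b := by cases c <;> simp
  exact ⟨_, hh, Pf_eq hh _⟩

lemma mem_node {s : List Bool} {x : ℕ} (hx : x ∈ node a b s) : x = a ∨ x = b := by
  induction s with
  | nil => simp [node] at hx
  | cons c t ih =>
    obtain ⟨d, hd, he⟩ := node_cons_eq (a := a) (b := b) c t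
    rw [he] at hx
    rcases List.mem_append.mp hx with hx | hx
    · rw [(List.mem_replicate.mp hx).2]; exact hd
    · exact mem_pfAux (flip_eq_or d) hx

lemma length_node_cons (c : Bool) (s : List Bool) :
    (node a b (c :: s)).length = (node a b s).sum + 2 * a := by
  obtain ⟨d, -, he⟩ := node_cons_eq (a := a) (b := b) c s
  rw [he]
  simp only [List.length_append, List.length_replicate, length_pfAux]
  omega

lemma even_sum_add_length {l : List ℕ} (hl : ∀ x ∈ l, Odd x) : Even (l.sum + l.length) := by
  induction l with
  | nil => simp
  | cons x t ih =>
    have hx := hl x List.mem_cons_self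
    have ht := ih fun y hy => hl y (List.mem_cons_of_mem x hy)
    obtain ⟨m, hm⟩ := ht
    obtain ⟨k, hk⟩ := hx
    exact ⟨m + k + 1, by simp only [List.sum_cons, List.length_cons]; omega⟩

lemma even_length_node (ha : Odd a) (hb : Odd b) (s : List Bool) :
    Even (node a b s).length := by
  induction s with
  | nil => simp [node]
  | cons c t ih =>
    have hodd : ∀ x ∈ node a b t, Odd x := fun x hx => by
      rcases mem_node hx with rfl | rfl
      exacts [ha, hb]
    have hsum : Even (node a b t).sum := (Nat.even_add.mp (even_sum_add_length hodd)).mpr ih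
    rw [length_node_cons]
    exact hsum.add (even_two_mul a)

end Primitives

section AlphabetOneB

variable {b : ℕ}

lemma sum_add_le_sum_pfAux (hb : 1 ≤ b) :
    ∀ (u : List ℕ) {c : ℕ}, (c = 1 ∨ c = b) → (∀ x ∈ u, 1 ≤ x) →
      u.sum + (b - 1) * (u.length / 2) + 1 ≤ (pfAux 1 b c u).sum
  | [], c, hc, _ => by rcases hc with rfl | rfl <;> simp [pfAux, hb]
  | [p], c, hc, _ => by
    have : 1 ≤ flip 1 b c := by rcases flip_eq_or (a := 1) (b := b) c with h | h <;> omega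
    have : p ≤ p * c := Nat.le_mul_of_pos_right p (by omega)
    simp only [pfAux, List.sum_append, List.sum_replicate, smul_eq_mul, List.replicate_one,
      List.sum_cons, List.sum_nil, List.length_singleton, Nat.reduceDiv, mul_zero]
    omega
  | p :: p' :: t, c, hc, hu => by
    have hp : 1 ≤ p := hu p (by simp)
    have hp' : 1 ≤ p' := hu p' (by simp)
    have ih := sum_add_le_sum_pfAux hb t (flip_eq_or (flip 1 b c)) fun x hx => hu x (by simp [hx])
    -- of two consecutive runs, one is written with the letter `b`
    have hpair : p + p' + (b - 1) ≤ p * c + p' * flip 1 b c := by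
      obtain ⟨m, rfl⟩ : ∃ m, b = m + 1 := ⟨b - 1, by omega⟩
      rw [Nat.add_sub_cancel]
      rcases hc with rfl | rfl
      · simp only [flip, if_true]; nlinarith
      · rcases flip_eq_or (a := 1) (b := m + 1) (m + 1) with h | h <;> rw [h] <;> nlinarith
    have hlen : (p :: p' :: t).length / 2 = t.length / 2 + 1 := by simp only [List.length_cons]; omega
    simp only [pfAux, List.sum_append, List.sum_replicate, smul_eq_mul, List.sum_cons, hlen]
    nlinarith

lemma sum_node_cons_ge (hb : 1 ≤ b) (c : Bool) (s : List Bool) :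
    (node 1 b s).sum + (b - 1) * ((node 1 b s).length / 2) + 2 ≤ (node 1 b (c :: s)).sum := by
  obtain ⟨d, hd, he⟩ := node_cons_eq (a := 1) (b := b) c s
  have hpos : ∀ x ∈ node 1 b s, 1 ≤ x := fun x hx => by rcases mem_node hx with rfl | rfl <;> omega
  have := sum_add_le_sum_pfAux hb (node 1 b s) (flip_eq_or d) hpos
  rw [he, List.sum_append]
  rcases hd with rfl | rfl <;> simp only [List.replicate_one, List.sum_cons, List.sum_nil] <;> omega

lemma length_node_cons_cons_ge (hb : 1 ≤ b) (c c' : Bool) (t : List Bool) :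
    (node 1 b (c' :: t)).length + (b - 1) * ((node 1 b t).length / 2) + 2
      ≤ (node 1 b (c :: c' :: t)).length := by
  have := sum_node_cons_ge hb c' t
  rw [length_node_cons, length_node_cons]
  omega

end AlphabetOneB

lemma li_le_length_node (a b : ℕ) (s : List Bool) : li a b s.length ≤ (node a b s).length :=
  Nat.sInf_le ⟨s.get, by rw [List.ofFn_get]⟩

lemma exists_length_node_eq_li (a b i : ℕ) :
    ∃ s : List Bool, s.length = i ∧ (node a b s).length = li a b i := by
  obtain ⟨f, hf⟩ := Nat.sInf_mem (⟨_, fun _ => false, rfl⟩ :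
    {m | ∃ s : Fin i → Bool, (node a b (List.ofFn s)).length = m}.Nonempty)
  exact ⟨List.ofFn f, List.length_ofFn, hf⟩

lemma li_one (a b : ℕ) : li a b 1 = 2 * a := by
  obtain ⟨s, hs, hsl⟩ := exists_length_node_eq_li a b 1
  obtain ⟨c, rfl⟩ := List.length_eq_one_iff.mp hs
  rw [← hsl, length_node_cons]
  simp [node]

lemma li_add_two_ge {b : ℕ} (hbo : Odd b) (n : ℕ) :
    2 * li 1 b (n + 1) + (b - 1) * li 1 b n + 4 ≤ 2 * li 1 b (n + 2) := by
  obtain ⟨s, hs, hsl⟩ := exists_length_node_eq_li 1 b (n + 2)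
  rcases s with _ | ⟨c, _ | ⟨c', t⟩⟩ <;> simp only [List.length_cons, List.length_nil] at hs
  · omega
  · omega
  have ht : t.length = n := by omega
  have hrec := length_node_cons_cons_ge hbo.pos c c' t
  have h₁ := li_le_length_node 1 b (c' :: t)
  have h₀ := li_le_length_node 1 b t
  rw [List.length_cons, ht] at h₁
  rw [ht] at h₀
  have hhalf : 2 * ((b - 1) * ((node 1 b t).length / 2)) = (b - 1) * (node 1 b t).length := by
    rw [mul_left_comm, Nat.two_mul_div_two_of_even (even_length_node odd_one hbo t)]
  have := Nat.mul_le_mul_left (b - 1) h₀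
  omega

lemma mul_pow_le_of_two_step_recurrence {x : ℕ → ℝ} {q l C : ℝ} (hq : 0 ≤ q)
    (hl : l ^ 2 = l + q) (h₀ : C ≤ x 0) (h₁ : C * l ≤ x 1)
    (hx : ∀ n, x (n + 1) + q * x n ≤ x (n + 2)) (n : ℕ) : C * l ^ n ≤ x n := by
  suffices h : ∀ n, C * l ^ n ≤ x n ∧ C * l ^ (n + 1) ≤ x (n + 1) from (h n).1
  intro n
  induction n with
  | zero => simpa using ⟨h₀, h₁⟩
  | succ n ih =>
    refine ⟨ih.2, ?_⟩
    calc C * l ^ (n + 2) = C * l ^ (n + 1) + q * (C * l ^ n) := by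
          linear_combination C * l ^ n * hl
      _ ≤ x (n + 1) + q * x n := add_le_add ih.2 (mul_le_mul_of_nonneg_left ih.1 hq)
      _ ≤ x (n + 2) := hx n

lemma li_succ_ge_pow {b : ℕ} (hbo : Odd b) {l : ℝ} (hl₁ : 1 ≤ l) (hl : l ^ 2 = l + (b - 1) / 2)
    (n : ℕ) : l⁻¹ * l ^ n ≤ li 1 b (n + 1) := by
  have hrec : ∀ m, (li 1 b (m + 2) : ℝ) + (b - 1) / 2 * li 1 b (m + 1) ≤ li 1 b (m + 3) := by
    intro m
    have : ((2 * li 1 b (m + 2) + (b - 1) * li 1 b (m + 1) + 4 : ℕ) : ℝ) ≤ 2 * li 1 b (m + 3) := by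
      exact_mod_cast li_add_two_ge hbo (m + 1)
    push_cast [Nat.cast_sub hbo.pos] at this
    linarith
  have h₀ : l⁻¹ ≤ li 1 b 1 := by
    rw [li_one, mul_one, Nat.cast_ofNat]
    linarith [inv_le_one_of_one_le₀ hl₁]
  have h₁ : l⁻¹ * l ≤ li 1 b 2 := by
    have : 2 * li 1 b 1 + (b - 1) * li 1 b 0 + 4 ≤ 2 * li 1 b 2 := li_add_two_ge hbo 0
    rw [inv_mul_cancel₀ (by positivity)]
    exact_mod_cast (by omega : 1 ≤ li 1 b 2)
  have hb : (1 : ℝ) ≤ b := by exact_mod_cast hbo.pos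
  exact mul_pow_le_of_two_step_recurrence (x := fun n => (li 1 b (n + 1) : ℝ))
    (by linarith) hl h₀ h₁ hrec n

theorem stmt19_general (b : ℕ) (hbo : Odd b) :
    ∃ C > (0 : ℝ), ∃ D ≥ (0 : ℝ), ∀ i : ℕ,
      C * ((1 + Real.sqrt (2 * b - 1)) / 2) ^ i - D - 1 ≤ (li 1 b i : ℝ) := by
  have hb : (1 : ℝ) ≤ b := by exact_mod_cast hbo.pos
  set l := (1 + Real.sqrt (2 * b - 1)) / 2 with hl_def
  have hl₁ : 1 ≤ l := by
    have := Real.one_le_sqrt.mpr (show (1 : ℝ) ≤ 2 * b - 1 by linarith)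
    rw [hl_def]
    linarith
  have hl : l ^ 2 = l + (b - 1) / 2 := by
    linear_combination Real.sq_sqrt (show (0 : ℝ) ≤ 2 * b - 1 by linarith) / 4
  refine ⟨(l ^ 2)⁻¹, by positivity, 0, le_rfl, ?_⟩
  rintro (_ | i)
  · have : (l ^ 2)⁻¹ ≤ 1 := inv_le_one_of_one_le₀ (one_le_pow₀ hl₁)
    simp only [pow_zero, mul_one, sub_zero]
    linarith [(li 1 b 0).cast_nonneg (α := ℝ)]
  · have : (l ^ 2)⁻¹ * l ^ (i + 1) = l⁻¹ * l ^ i := by field_simp; ring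
    linarith [li_succ_ge_pow hbo hl₁ hl i]

theorem stmt19 (b : ℕ) (hb : 3 ≤ b) (hbo : Odd b) :
    ∃ C > (0 : ℝ), ∃ D ≥ (0 : ℝ), ∀ i : ℕ,
      C * ((1 + Real.sqrt (2 * b - 1)) / 2) ^ i - D - 1 ≤ (li 1 b i : ℝ) :=
  stmt19_general b hbo

end SmoothWords
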